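/- If each branch's choice function satisfies IRC, substitutability, and the law of aggregate demand, then the cumulative offer mechanism is strategy-proof: no agent can obtain a strictly preferred contract by misreporting her preference. -/

import Mathlib

open Finset
variable {I B X : Type*} [DecidableEq I] [DecidableEq B] [DecidableEq X] [Fintype X]

/-- Contracts currently held by the branches: from the cumulative offer set `A`,
each branch holds its choice from the offers addressed to it. -/
noncomputable def held (br : X → B) (C : B → Finset X → Finset X) (A : Finset X) : Finset X :=
  A.filter (fun x => x ∈ C (br x) (A.filter (fun y => br y = br x)))

/-- Agent `i` has no currently held contract. -/
noncomputable def FreeAgent (ag : X → I) (br : X → B) (C : B → Finset X → Finset X)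
    (A : Finset X) (i : I) : Prop :=
  ∀ x ∈ held br C A, ag x ≠ i

/-- Contract `x` is a valid next proposal at cumulative offer set `A`: its agent is
free, `x` is acceptable, not yet proposed, and most preferred among the agent's
acceptable not-yet-proposed contracts (`none` is the outside option; higher
`P`-value = more preferred). -/
noncomputable def Proposable (ag : X → I) (br : X → B) (C : B → Finset X → Finset X)
    (P : I → Option X → ℕ) (A : Finset X) (x : X) : Prop :=
  x ∉ A ∧ P (ag x) none < P (ag x) (some x) ∧ FreeAgent ag br C A (ag x) ∧
    ∀ y : X, ag y = ag x → y ∉ A → P (ag y) none < P (ag y) (some y) →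
      P (ag x) (some y) ≤ P (ag x) (some x)

/-- A policy resolving the arbitrary choice of proposer: it returns a valid proposal
whenever one exists, and `none` exactly when no agent can propose. -/
noncomputable def ValidPolicy (ag : X → I) (br : X → B) (C : B → Finset X → Finset X)
    (P : I → Option X → ℕ) (pol : Finset X → Option X) : Prop :=
  ∀ A : Finset X, (∀ x, pol A = some x → Proposable ag br C P A x) ∧
    (pol A = none → ∀ x, ¬ Proposable ag br C P A x)

/-- The cumulative offer process: starting from offer set `A`, repeatedly add the
proposal chosen by the policy (fuel-indexed; `Fintype.card X + 1` steps suffice). -/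
noncomputable def cop (pol : Finset X → Option X) : ℕ → Finset X → Finset X
  | 0, A => A
  | n + 1, A =>
    match pol A with
    | none => A
    | some x => cop pol n (insert x A)

/-- The outcome of the cumulative offer process. -/
noncomputable def outcome (br : X → B) (C : B → Finset X → Finset X)
    (pol : Finset X → Option X) : Finset X :=
  held br C (cop pol (Fintype.card X + 1) ∅)

/-- Irrelevance of rejected contracts. -/
def IRCb (Cb : Finset X → Finset X) : Prop :=
  ∀ (Y : Finset X) (z : X), z ∉ Y → z ∉ Cb (insert z Y) → Cb Y = Cb (insert z Y)

/-- Substitutability. -/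
def Substb (Cb : Finset X → Finset X) : Prop :=
  ∀ (Y : Finset X) (z z' : X), z ∉ Cb (insert z Y) → z ∉ Cb (insert z' (insert z Y))

/-- Law of aggregate demand. -/
def LADb (Cb : Finset X → Finset X) : Prop :=
  ∀ Y Y' : Finset X, Y ⊆ Y' → (Cb Y).card ≤ (Cb Y').card


/-- Agent `i`'s utility from outcome `Z` under true preference `P i`: the value of
her assignment (her contract in `Z`, or the outside option). -/
noncomputable def util (ag : X → I) (P : I → Option X → ℕ) (i : I) (Z : Finset X) : ℕ :=
  max (P i none) ((Z.filter (fun x => ag x = i)).sup (fun x => P i (some x)))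

/-!
Suppose agent `i` obtains `x` by reporting `Q` although `x` is better than her truthful
assignment. Reporting only `x` also gets her `x`: that run never leaves the offers made under `Q`
(everybody else proposes only contracts she weakly prefers to her assignment there), and by
substitutability `x` stays chosen. Now let `i` report `P i` truncated below `x`. Were she
unassigned there, the run with report "only `x`" would stay inside the truncated run, and every
agent held in the truncated run would also be held in the smaller one, where `i` is held too;
this contradicts the law of aggregate demand. So the truncation gives `i` some `z` weakly better
than `x`. Finally the truthful run stays inside the truncated one, and by substitutability no
agent ends up worse off in it than there.
-/

set_option linter.unusedSectionVars false

open Function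

theorem Substb.mem_of_subset {Cb : Finset X → Finset X} (h : Substb Cb) {S T : Finset X}
    (hST : S ⊆ T) {z : X} (hzS : z ∈ S) (hzT : z ∈ Cb T) : z ∈ Cb S := by
  suffices ∀ U : Finset X, z ∉ Cb S → z ∉ Cb (S ∪ U) by
    by_contra hz
    exact this T hz (by rwa [union_eq_right.2 hST])
  intro U hz
  induction U using Finset.induction_on with
  | empty => rwa [union_empty]
  | insert a U _ ih =>
    have hmem : z ∈ S ∪ U := mem_union_left U hzS
    have := h ((S ∪ U).erase z) z a (by rwa [insert_erase hmem])
    rwa [insert_erase hmem, ← union_insert] at this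

section Market

variable (ag : X → I) (br : X → B) (C : B → Finset X → Finset X)

abbrev Acceptable (π : I → Option X → ℕ) (z : X) : Prop :=
  π (ag z) none < π (ag z) (some z)

def Terminal (π : I → Option X → ℕ) (A : Finset X) : Prop :=
  ∀ v, ¬ Proposable ag br C π A v

inductive Reachable (π : I → Option X → ℕ) : Finset X → Prop
  | empty : Reachable π ∅
  | insert {A : Finset X} {v : X} :
      Reachable π A → Proposable ag br C π A v → Reachable π (insert v A)

def ContainsUpperContours (π : I → Option X → ℕ) (F : Finset X) : Prop :=
  ∀ u, Acceptable ag π u →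
    (∀ z ∈ held br C F, ag z = ag u → π (ag u) (some z) ≤ π (ag u) (some u)) → u ∈ F

theorem mem_held {A : Finset X} {z : X} :
    z ∈ held br C A ↔ z ∈ A ∧ z ∈ C (br z) (A.filter (fun y => br y = br z)) :=
  mem_filter

theorem held_subset (A : Finset X) : held br C A ⊆ A :=
  filter_subset _ _

theorem mem_held_of_subset (hsub : ∀ b, Substb (C b)) {A A' : Finset X} (hAA' : A ⊆ A')
    {z : X} (hzA : z ∈ A) (hz : z ∈ held br C A') : z ∈ held br C A :=
  (mem_held br C).2 ⟨hzA, (hsub _).mem_of_subset (filter_subset_filter _ hAA')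
    (mem_filter.2 ⟨hzA, rfl⟩) ((mem_held br C).1 hz).2⟩

theorem held_insert_subset (hsub : ∀ b, Substb (C b)) (A : Finset X) (v : X) :
    held br C (insert v A) ⊆ insert v (held br C A) := by
  intro z hz
  rcases mem_insert.1 (held_subset br C _ hz) with rfl | hzA
  · exact mem_insert_self _ _
  · exact mem_insert_of_mem (mem_held_of_subset br C hsub (subset_insert v A) hzA hz)

theorem filter_held_eq (hCb : ∀ b Y, C b Y ⊆ Y.filter (fun x => br x = b))
    (A : Finset X) (b : B) :
    (held br C A).filter (fun z => br z = b) = C b (A.filter (fun y => br y = b)) := by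
  ext z
  rw [mem_filter, mem_held]
  constructor
  · rintro ⟨⟨-, hz⟩, rfl⟩
    exact hz
  · intro hz
    obtain ⟨hzA, rfl⟩ := mem_filter.1 (hCb b _ hz)
    exact ⟨⟨(mem_filter.1 hzA).1, hz⟩, rfl⟩

theorem card_held_le_card_held (hCb : ∀ b Y, C b Y ⊆ Y.filter (fun x => br x = b))
    (hlad : ∀ b, LADb (C b)) {A A' : Finset X} (h : A ⊆ A') :
    #(held br C A) ≤ #(held br C A') := by
  have hmaps : ∀ A₀ ⊆ A', ∀ z ∈ held br C A₀, br z ∈ A'.image br :=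
    fun A₀ h₀ z hz => mem_image_of_mem br (h₀ (held_subset br C A₀ hz))
  rw [card_eq_sum_card_fiberwise (hmaps A h), card_eq_sum_card_fiberwise (hmaps A' subset_rfl)]
  refine sum_le_sum fun b _ => ?_
  rw [filter_held_eq br C hCb, filter_held_eq br C hCb]
  exact hlad b _ _ (filter_subset_filter _ h)

variable {ag br C} {π : I → Option X → ℕ}

theorem exists_reachable_terminal (π : I → Option X → ℕ) :
    ∃ F, Reachable ag br C π F ∧ Terminal ag br C π F := by
  classical
  obtain ⟨F, hF, hmax⟩ := exists_max_image ((univ : Finset (Finset X)).filter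
    (Reachable ag br C π)) card ⟨∅, mem_filter.2 ⟨mem_univ _, .empty⟩⟩
  refine ⟨F, (mem_filter.1 hF).2, fun v hv => ?_⟩
  have := hmax (insert v F) (mem_filter.2 ⟨mem_univ _, (mem_filter.1 hF).2.insert hv⟩)
  rw [card_insert_of_notMem hv.1] at this
  omega

theorem reachable_cop {pol : Finset X → Option X} (hpol : ValidPolicy ag br C π pol)
    {A : Finset X} (hA : Reachable ag br C π A) (n : ℕ) :
    Reachable ag br C π (cop pol n A) := by
  induction n generalizing A with
  | zero => exact hA
  | succ n ih =>
    rcases hp : pol A with _ | v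
    · simpa [cop, hp] using hA
    · simpa [cop, hp] using ih (hA.insert ((hpol A).1 v hp))

theorem terminal_cop {pol : Finset X → Option X} (hpol : ValidPolicy ag br C π pol) :
    Terminal ag br C π (cop pol (Fintype.card X + 1) ∅) := by
  suffices ∀ n A, Fintype.card X < n + #A → Terminal ag br C π (cop pol n A) from
    this _ _ (by simp)
  intro n
  induction n with
  | zero => exact fun A hA => absurd (card_le_univ A) (by omega)
  | succ n ih =>
    intro A hA
    rcases hp : pol A with _ | v
    · simpa [cop, hp, Terminal] using (hpol A).2 hp
    · have hv := (hpol A).1 v hp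
      simpa [cop, hp] using ih _ (by rw [card_insert_of_notMem hv.1]; omega)

theorem mem_of_terminal_of_freeAgent {F : Finset X} (hF : Terminal ag br C π F) {j : I}
    (hj : FreeAgent ag br C F j) {w : X} (hw : ag w = j) (hacc : Acceptable ag π w) :
    w ∈ F := by
  subst hw
  by_contra hwF
  obtain ⟨m, hm, hmax⟩ := exists_max_image
    ({y | ag y = ag w ∧ y ∉ F ∧ Acceptable ag π y} : Finset X) (fun y => π (ag w) (some y))
    ⟨w, by simp [hwF, hacc]⟩
  obtain ⟨hmw, hmF, hmacc⟩ := (mem_filter.1 hm).2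
  refine hF m ⟨hmF, hmacc, hmw ▸ hj, fun y hy hyF hyacc => ?_⟩
  rw [hmw]
  exact hmax y (mem_filter.2 ⟨mem_univ _, hy.trans hmw, hyF, hyacc⟩)

namespace Reachable

variable {A : Finset X}

theorem acceptable (hA : Reachable ag br C π A) {z : X} (hz : z ∈ A) : Acceptable ag π z := by
  induction hA with
  | empty => simp at hz
  | insert _ hv ih =>
    rcases mem_insert.1 hz with rfl | hz
    exacts [hv.2.1, ih hz]

theorem injOn_held (hsub : ∀ b, Substb (C b)) (hA : Reachable ag br C π A) :
    Set.InjOn ag (held br C A) := by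
  induction hA with
  | empty => simp [held]
  | insert _ hv ih =>
    intro z hz w hw hzw
    rcases mem_insert.1 (held_insert_subset br C hsub _ _ hz) with rfl | hz' <;>
      rcases mem_insert.1 (held_insert_subset br C hsub _ _ hw) with rfl | hw'
    · rfl
    · exact absurd hzw.symm (hv.2.2.1 w hw')
    · exact absurd hzw (hv.2.2.1 z hz')
    · exact ih hz' hw' hzw

theorem le_of_notMem (hA : Reachable ag br C π A) {z w : X} (hz : z ∈ A) (hw : w ∉ A)
    (hwz : ag w = ag z) (hacc : Acceptable ag π w) :
    π (ag z) (some w) ≤ π (ag z) (some z) := by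
  induction hA with
  | empty => simp at hz
  | insert _ hv ih =>
    have hw' := fun h => hw (mem_insert_of_mem h)
    rcases mem_insert.1 hz with rfl | hz
    · exact hv.2.2.2 w hwz hw' hacc
    · exact ih hz hw'

theorem containsUpperContours (hA : Reachable ag br C π A) (hAt : Terminal ag br C π A)
    (hπ : ∀ j, Injective (π j ∘ some)) : ContainsUpperContours ag br C π A := by
  intro u hu hge
  by_contra huA
  by_cases hfree : FreeAgent ag br C A (ag u)
  · exact huA (mem_of_terminal_of_freeAgent hAt hfree rfl hu)
  obtain ⟨z, hz, hzu⟩ : ∃ z ∈ held br C A, ag z = ag u := by simpa [FreeAgent] using hfree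
  have hle : π (ag u) (some u) ≤ π (ag u) (some z) :=
    hzu ▸ hA.le_of_notMem (held_subset br C A hz) huA hzu.symm hu
  have huz : u = z := hπ (ag u) (hle.antisymm (hge z hz hzu))
  exact huA (huz ▸ held_subset br C A hz)

theorem subset_of_containsUpperContours (hsub : ∀ b, Substb (C b))
    {π₀ : I → Option X → ℕ} {F : Finset X} (hF : ContainsUpperContours ag br C π₀ F)
    (hFacc : ∀ z ∈ held br C F, Acceptable ag π₀ z)
    (hdev : ∀ v, π (ag v) ≠ π₀ (ag v) → Acceptable ag π v → v ∈ F)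
    (hA : Reachable ag br C π A) : A ⊆ F := by
  induction hA with
  | empty => exact empty_subset F
  | @insert A v _ hv ih =>
    refine insert_subset ?_ ih
    by_cases hπv : π (ag v) = π₀ (ag v)
    swap
    · exact hdev v hπv hv.2.1
    have hvacc : Acceptable ag π₀ v := by simpa only [Acceptable, hπv] using hv.2.1
    refine hF v hvacc fun z hz hzv => ?_
    have hzA : z ∉ A := fun hzA => hv.2.2.1 z (mem_held_of_subset br C hsub ih hzA hz) hzv
    have hzacc : Acceptable ag π z := by
      simpa only [Acceptable, hzv, hπv] using hFacc z hz
    simpa only [hπv] using hv.2.2.2 z hzv hzA hzacc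

theorem exists_held_ge (hsub : ∀ b, Substb (C b)) (hA : Reachable ag br C π A)
    (hAt : Terminal ag br C π A) {F : Finset X} (hAF : A ⊆ F) {z : X} (hz : z ∈ held br C F)
    (hzacc : Acceptable ag π z) :
    ∃ w ∈ held br C A, ag w = ag z ∧ π (ag z) (some z) ≤ π (ag z) (some w) := by
  by_cases hzA : z ∈ A
  · exact ⟨z, mem_held_of_subset br C hsub hAF hzA hz, rfl, le_rfl⟩
  have hbusy : ¬ FreeAgent ag br C A (ag z) :=
    fun hfree => hzA (mem_of_terminal_of_freeAgent hAt hfree rfl hzacc)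
  obtain ⟨w, hw, hwz⟩ : ∃ w ∈ held br C A, ag w = ag z := by simpa [FreeAgent] using hbusy
  exact ⟨w, hw, hwz, hwz ▸ hA.le_of_notMem (held_subset br C A hw) hzA hwz.symm hzacc⟩

/-- Every agent held at `A` is also held at `F₁`, so by the law of aggregate demand `i` cannot be
free at `A`. -/
theorem exists_held_of_subset (hCb : ∀ b Y, C b Y ⊆ Y.filter (fun x => br x = b))
    (hsub : ∀ b, Substb (C b)) (hlad : ∀ b, LADb (C b)) {π₁ : I → Option X → ℕ} {F₁ : Finset X}
    (h₁ : Reachable ag br C π₁ F₁) (h₁t : Terminal ag br C π₁ F₁) (h₂ : Reachable ag br C π A)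
    (hF₁A : F₁ ⊆ A) {i : I} (hagree : ∀ j ≠ i, π j = π₁ j) {x : X} (hx : x ∈ held br C F₁)
    (hxi : ag x = i) : ∃ z ∈ held br C A, ag z = i := by
  by_contra! hfree
  have himage : (held br C A).image ag ⊆ ((held br C F₁).image ag).erase i := by
    intro j hj
    obtain ⟨z, hz, rfl⟩ := mem_image.1 hj
    refine mem_erase.2 ⟨hfree z hz, ?_⟩
    by_contra hnot
    have hzfree : FreeAgent ag br C F₁ (ag z) := fun u hu hu' => hnot (mem_image.2 ⟨u, hu, hu'⟩)
    have hzacc : Acceptable ag π₁ z := by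
      simpa only [Acceptable, hagree _ (hfree z hz)] using h₂.acceptable (held_subset br C A hz)
    have hzF₁ := mem_of_terminal_of_freeAgent h₁t hzfree rfl hzacc
    exact hzfree z (mem_held_of_subset br C hsub hF₁A hzF₁ hz) rfl
  have hcard := card_le_card himage
  rw [card_image_of_injOn (h₂.injOn_held hsub), card_erase_of_mem (hxi ▸ mem_image_of_mem ag hx),
    card_image_of_injOn (h₁.injOn_held hsub)] at hcard
  have := card_held_le_card_held br C hCb hlad hF₁A
  have := card_pos.2 ⟨x, hx⟩
  omega

end Reachable

def singletonReport (x : X) : Option X → ℕ :=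
  fun o => if o = some x then 1 else 0

/-- Ranks contracts as `p` does but moves the outside option to just below `x`, so exactly the
contracts weakly `p`-preferred to `x` stay acceptable. -/
def truncation (p : Option X → ℕ) (x : X) : Option X → ℕ :=
  fun o => o.elim (p (some x)) fun w => p (some w) + 1

theorem injective_update_comp_some (hπ : ∀ j, Injective (π j ∘ some)) {i : I}
    {p : Option X → ℕ} (hp : Injective (p ∘ some)) (j : I) :
    Injective (update π i p j ∘ some) := by
  rcases eq_or_ne j i with rfl | hj
  · simpa only [update_self] using hp
  · simpa only [update_of_ne hj] using hπ j

theorem injective_truncation_comp_some {p : Option X → ℕ} (hp : Injective (p ∘ some)) (x : X) :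
    Injective (truncation p x ∘ some) :=
  fun _ _ h => hp (Nat.succ_injective h)

theorem eq_of_acceptable_singletonReport {x w : X}
    (hw : Acceptable ag (update π (ag x) (singletonReport x)) w) (hwx : ag w = ag x) : w = x := by
  by_contra h
  simp [Acceptable, hwx, singletonReport, h] at hw

theorem acceptable_truncation_iff {x w : X} (hwx : ag w = ag x) :
    Acceptable ag (update π (ag x) (truncation (π (ag x)) x)) w ↔
      π (ag x) (some x) ≤ π (ag x) (some w) := by
  simp [Acceptable, hwx, truncation]

theorem mem_held_singletonReport (hsub : ∀ b, Substb (C b)) (hπ : ∀ j, Injective (π j ∘ some))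
    {A F : Finset X} (hA : Reachable ag br C π A) (hAt : Terminal ag br C π A) {x : X}
    (hx : x ∈ held br C A) (hF : Reachable ag br C (update π (ag x) (singletonReport x)) F)
    (hFt : Terminal ag br C (update π (ag x) (singletonReport x)) F) : x ∈ held br C F := by
  have hxx : Acceptable ag (update π (ag x) (singletonReport x)) x := by
    simp [Acceptable, singletonReport]
  have hFA : F ⊆ A := hF.subset_of_containsUpperContours hsub (hA.containsUpperContours hAt hπ)
    (fun z hz => hA.acceptable (held_subset br C A hz)) fun v hv hvacc => by
      obtain rfl := eq_of_acceptable_singletonReport hvacc (by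
        by_contra h
        exact hv (update_of_ne h _ _))
      exact held_subset br C A hx
  have hxF : x ∈ F := by
    by_cases hfree : FreeAgent ag br C F (ag x)
    · exact mem_of_terminal_of_freeAgent hFt hfree rfl hxx
    obtain ⟨w, hw, hwx⟩ : ∃ w ∈ held br C F, ag w = ag x := by simpa [FreeAgent] using hfree
    obtain rfl := eq_of_acceptable_singletonReport (hF.acceptable (held_subset br C F hw)) hwx
    exact held_subset br C F hw
  exact mem_held_of_subset br C hsub hFA hxF hx

theorem exists_held_truncation (hCb : ∀ b Y, C b Y ⊆ Y.filter (fun x => br x = b))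
    (hsub : ∀ b, Substb (C b)) (hlad : ∀ b, LADb (C b)) (hπ : ∀ j, Injective (π j ∘ some))
    {x : X} {F A : Finset X} (hF : Reachable ag br C (update π (ag x) (singletonReport x)) F)
    (hFt : Terminal ag br C (update π (ag x) (singletonReport x)) F) (hxF : x ∈ held br C F)
    (hA : Reachable ag br C (update π (ag x) (truncation (π (ag x)) x)) A)
    (hAt : Terminal ag br C (update π (ag x) (truncation (π (ag x)) x)) A) :
    ∃ z ∈ held br C A, ag z = ag x := by
  by_contra! hfree
  have hxA : x ∈ A :=
    mem_of_terminal_of_freeAgent hAt hfree rfl ((acceptable_truncation_iff rfl).2 le_rfl)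
  have hπA := injective_update_comp_some (i := ag x) hπ
    (injective_truncation_comp_some (hπ (ag x)) x)
  have hFA : F ⊆ A := hF.subset_of_containsUpperContours hsub (hA.containsUpperContours hAt hπA)
    (fun z hz => hA.acceptable (held_subset br C A hz)) fun v hv hvacc => by
      obtain rfl := eq_of_acceptable_singletonReport hvacc (by
        by_contra h
        exact hv (by simp only [update_of_ne h]))
      exact hxA
  obtain ⟨z, hz, hzx⟩ := hF.exists_held_of_subset hCb hsub hlad hFt hA hFA
    (fun j hj => by simp only [update_of_ne hj]) hxF rfl
  exact hfree z hz hzx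

theorem acceptable_of_acceptable_truncation {x w : X} (hx : Acceptable ag π x)
    (hw : Acceptable ag (update π (ag x) (truncation (π (ag x)) x)) w) : Acceptable ag π w := by
  rcases eq_or_ne (ag w) (ag x) with hwx | hwx
  · have hxw := (acceptable_truncation_iff hwx).1 hw
    simp only [Acceptable, hwx] at hx ⊢
    omega
  · simpa only [Acceptable, update_of_ne hwx] using hw

theorem containsUpperContours_of_truncation {x z : X} {A : Finset X}
    (hA : ContainsUpperContours ag br C (update π (ag x) (truncation (π (ag x)) x)) A)
    (hz : z ∈ held br C A) (hzx : ag z = ag x) (hxz : π (ag x) (some x) ≤ π (ag x) (some z)) :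
    ContainsUpperContours ag br C π A := by
  intro u hu hge
  rcases eq_or_ne (ag u) (ag x) with hux | hux
  · have hzu := hge z hz (hzx.trans hux.symm)
    rw [hux] at hzu
    refine hA u ((acceptable_truncation_iff hux).2 (hxz.trans hzu)) fun z' hz' hz'u => ?_
    have hz'u' := hge z' hz' hz'u
    simp only [hux, update_self, truncation, Option.elim] at hz'u' ⊢
    omega
  · refine hA u (by simpa only [Acceptable, update_of_ne hux] using hu) fun z' hz' hz'u => ?_
    simpa only [update_of_ne hux] using hge z' hz' hz'u

theorem exists_held_ge_of_truncation (hsub : ∀ b, Substb (C b))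
    (hπ : ∀ j, Injective (π j ∘ some)) {x : X} (hx : Acceptable ag π x) {A F : Finset X}
    (hA : Reachable ag br C (update π (ag x) (truncation (π (ag x)) x)) A)
    (hAt : Terminal ag br C (update π (ag x) (truncation (π (ag x)) x)) A)
    {z : X} (hz : z ∈ held br C A) (hzx : ag z = ag x)
    (hF : Reachable ag br C π F) (hFt : Terminal ag br C π F) :
    ∃ w ∈ held br C F, ag w = ag x ∧ π (ag x) (some x) ≤ π (ag x) (some w) := by
  have hxz : π (ag x) (some x) ≤ π (ag x) (some z) :=
    (acceptable_truncation_iff hzx).1 (hA.acceptable (held_subset br C A hz))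
  have hAacc : ∀ z ∈ held br C A, Acceptable ag π z :=
    fun z hz => acceptable_of_acceptable_truncation hx (hA.acceptable (held_subset br C A hz))
  have hπA := injective_update_comp_some (i := ag x) hπ
    (injective_truncation_comp_some (hπ (ag x)) x)
  have hFA : F ⊆ A := hF.subset_of_containsUpperContours hsub
    (containsUpperContours_of_truncation (hA.containsUpperContours hAt hπA) hz hzx hxz) hAacc
    fun _ hv => absurd rfl hv
  obtain ⟨w, hw, hwz, hzw⟩ := hF.exists_held_ge hsub hFt hFA hz (hAacc z hz)
  exact ⟨w, hw, hwz.trans hzx, hxz.trans (hzx ▸ hzw)⟩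

theorem none_le_util (P : I → Option X → ℕ) (i : I) (Z : Finset X) : P i none ≤ util ag P i Z :=
  le_max_left _ _

theorem le_util_of_mem {P : I → Option X → ℕ} {i : I} {Z : Finset X} {z : X} (hz : z ∈ Z)
    (hzi : ag z = i) : P i (some z) ≤ util ag P i Z :=
  le_max_of_le_right (le_sup (f := fun x => P i (some x)) (mem_filter.2 ⟨hz, hzi⟩))

theorem exists_mem_eq_util {P : I → Option X → ℕ} {i : I} {Z : Finset X}
    (h : P i none < util ag P i Z) : ∃ x ∈ Z, ag x = i ∧ util ag P i Z = P i (some x) := by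
  unfold util at h ⊢
  rcases (Z.filter fun x => ag x = i).eq_empty_or_nonempty with hempty | hne
  · simp [hempty] at h
  obtain ⟨x, hx, hsup⟩ := exists_mem_eq_sup _ hne fun x => P i (some x)
  obtain ⟨hxZ, hxi⟩ := mem_filter.1 hx
  rw [hsup] at h ⊢
  exact ⟨x, hxZ, hxi, max_eq_right ((lt_max_iff.1 h).resolve_left (lt_irrefl _)).le⟩

end Market

theorem cop_strategyproof_general (ag : X → I) (br : X → B) (C : B → Finset X → Finset X)
    (P : I → Option X → ℕ) (i : I) (Q : Option X → ℕ)
    (hCb : ∀ b Y, C b Y ⊆ Y.filter (fun x => br x = b))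
    (hsub : ∀ b, Substb (C b)) (hlad : ∀ b, LADb (C b))
    (hP : ∀ j, Function.Injective (P j)) (hQ : Function.Injective Q)
    (pol pol' : Finset X → Option X)
    (hpol : ValidPolicy ag br C P pol)
    (hpol' : ValidPolicy ag br C (Function.update P i Q) pol') :
    util ag P i (outcome br C pol') ≤ util ag P i (outcome br C pol) := by
  by_contra! hlt
  obtain ⟨x, hxQ, rfl, hux⟩ := exists_mem_eq_util ((none_le_util P i _).trans_lt hlt)
  have hx : Acceptable ag P x := (none_le_util P _ _).trans_lt (hlt.trans_eq hux)
  have hPs : ∀ j, Injective (P j ∘ some) := fun j => (hP j).comp (Option.some_injective X)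
  obtain ⟨F, hF, hFt⟩ := exists_reachable_terminal (ag := ag) (br := br) (C := C)
    (update P (ag x) (singletonReport x))
  obtain ⟨A, hA, hAt⟩ := exists_reachable_terminal (ag := ag) (br := br) (C := C)
    (update P (ag x) (truncation (P (ag x)) x))
  have hxF : x ∈ held br C F := by
    refine mem_held_singletonReport hsub
      (injective_update_comp_some hPs (hQ.comp (Option.some_injective X)))
      (reachable_cop hpol' .empty _) (terminal_cop hpol') hxQ ?_ ?_ <;>
    rwa [update_idem]
  obtain ⟨z, hz, hzx⟩ := exists_held_truncation hCb hsub hlad hPs hF hFt hxF hA hAt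
  obtain ⟨w, hw, hwx, hxw⟩ := exists_held_ge_of_truncation hsub hPs hx hA hAt hz hzx
    (reachable_cop hpol .empty _) (terminal_cop hpol)
  exact (hlt.trans_eq hux).not_ge (hxw.trans (le_util_of_mem hw hwx))

/-- Strategy-proofness of the cumulative offer mechanism: with IRC, substitutability
and LAD, no agent can obtain a strictly preferred assignment by misreporting. -/
theorem cop_strategyproof (ag : X → I) (br : X → B) (C : B → Finset X → Finset X)
    (P : I → Option X → ℕ) (i : I) (Q : Option X → ℕ)
    (hCb : ∀ b Y, C b Y ⊆ Y.filter (fun x => br x = b))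
    (hfeas : ∀ b Y, ∀ x ∈ C b Y, ∀ y ∈ C b Y, ag x = ag y → x = y)
    (hirc : ∀ b, IRCb (C b)) (hsub : ∀ b, Substb (C b)) (hlad : ∀ b, LADb (C b))
    (hP : ∀ j, Function.Injective (P j)) (hQ : Function.Injective Q)
    (pol pol' : Finset X → Option X)
    (hpol : ValidPolicy ag br C P pol)
    (hpol' : ValidPolicy ag br C (Function.update P i Q) pol') :
    util ag P i (outcome br C pol') ≤ util ag P i (outcome br C pol) :=
  cop_strategyproof_general ag br C P i Q hCb hsub hlad hP hQ pol pol' hpol hpol'
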